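/- With the setup of the RKHM kernel PCA (samples w_1,…,w_n in a Hilbert C*-module over ℂ^{m×m}, Gram matrix G = V Σ V*, principal axes p_s = σ_s^{-1/2} W[v_s,0,…,0]), for each s ∈ {1,…,l} the family {p_j}_{j=1}^s minimizes the trace of the matrix-valued reconstruction error: tr( Σ_{t=1}^n |w_t − Σ_{j=1}^s p̂_j ⟨p̂_j, w_t⟩|² ) over all orthonormal systems {p̂_j}_{j=1}^s ⊆ M with each ⟨p̂_j, p̂_j⟩ of rank one. The minimum value is tr(Σ_t ⟨w_t,w_t⟩) − Σ_{j=1}^s σ_j. -/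

import Mathlib

/-!
The axes satisfy `⟨p_a, p_b⟩ = δ_ab e₀₀`, reproduce every sample, `w_t = Σ_a p_a ⟨p_a, w_t⟩`,
and diagonalize the sample covariance, `Σ_t ⟨p_a, w_t⟩⟨w_t, p_b⟩ = δ_ab σ_a e₀₀`. For an
orthonormal system `q` the traced error is `tr Σ_t ⟨w_t, w_t⟩` minus the captured variances
`tr Σ_t ⟨w_t, q_j⟩⟨q_j, w_t⟩`, and the covariance identity turns the captured variance of `q_j`
into `Σ_a σ_a β_ja` with `β_ja = tr(⟨p_a, q_j⟩⟨q_j, p_a⟩) ≥ 0`. Bessel's inequality, for `q_j`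
against `p` and for `p_a` against `q`, makes `β` doubly substochastic (rank one gives
`tr⟨q_j, q_j⟩ = 1`), so `Σ_{j,a} σ_a β_ja ≤ σ_1 + ⋯ + σ_s` because `σ` decreases, with equality
for `q = (p_1, …, p_s)`.
-/

open scoped Matrix.Norms.L2Operator ComplexOrder

/-- A Hilbert C*-module over the C*-algebra `ℂ^{m×m}` of `m × m` complex matrices (with the
operator norm): a right module with a matrix-valued inner product inducing the norm of `M`. -/
structure HilbertModuleMat (m : ℕ) (M : Type*) [NormedAddCommGroup M] where
  smul : M → Matrix (Fin m) (Fin m) ℂ → M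
  inner : M → M → Matrix (Fin m) (Fin m) ℂ
  smul_add_vec : ∀ (u v : M) c, smul (u + v) c = smul u c + smul v c
  smul_add_alg : ∀ (u : M) c d, smul u (c + d) = smul u c + smul u d
  smul_mul : ∀ (u : M) c d, smul u (c * d) = smul (smul u c) d
  smul_one : ∀ u : M, smul u 1 = u
  inner_add_right : ∀ u v w : M, inner u (v + w) = inner u v + inner u w
  inner_smul_right : ∀ (u v : M) c, inner u (smul v c) = inner u v * c
  inner_conj : ∀ u v : M, inner v u = star (inner u v)
  inner_self_posSemidef : ∀ u : M, (inner u u).PosSemidef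
  inner_definite : ∀ u : M, inner u u = 0 → u = 0
  norm_eq : ∀ u : M, ‖u‖ = Real.sqrt ‖inner u u‖

/-- A vector `q` is *normalized* if `⟨q,q⟩` is a nonzero idempotent. -/
def HilbertModuleMat.Normalized {m : ℕ} {M : Type*} [NormedAddCommGroup M]
    (h : HilbertModuleMat m M) (q : M) : Prop :=
  h.inner q q ≠ 0 ∧ h.inner q q * h.inner q q = h.inner q q

/-- The matrix-valued reconstruction error of the samples `w` projected on the family `f`,
traced: `tr Σ_t ⟨w_t − Σ_j f_j⟨f_j,w_t⟩, w_t − Σ_j f_j⟨f_j,w_t⟩⟩`. -/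
noncomputable def recErr {m n s : ℕ} {M : Type*} [NormedAddCommGroup M]
    (h : HilbertModuleMat m M) (w : Fin n → M) (f : Fin s → M) : ℂ :=
  (∑ t, h.inner (w t - ∑ j, h.smul (f j) (h.inner (f j) (w t)))
      (w t - ∑ j, h.smul (f j) (h.inner (f j) (w t)))).trace

open Matrix ComplexConjugate

theorem Matrix.trace_eq_rank_of_isIdempotentElem {n K : Type*} [Fintype n] [DecidableEq n]
    [Field K] {A : Matrix n n K} (hA : IsIdempotentElem A) : A.trace = A.rank :=
  A.trace_toLin'_eq.symm.trans
    (LinearMap.IsIdempotentElem.isProj_range _ (hA.map Matrix.toLinAlgEquiv')).trace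

lemma Fin.sum_castLE_eq_sum_ite {M : Type*} [AddCommMonoid M] {l s : ℕ} (hs : s ≤ l)
    (f : Fin l → M) :
    ∑ j : Fin s, f (Fin.castLE hs j) = ∑ u : Fin l, if (u : ℕ) < s then f u else 0 := by
  rw [← Finset.sum_filter]
  refine (Finset.sum_map _ (Fin.castLEEmb hs) f).symm.trans (Finset.sum_congr ?_ fun _ _ => rfl)
  ext u
  simpa using ⟨fun ⟨j, hj⟩ => hj ▸ j.isLt, fun hu => ⟨⟨u, hu⟩, rfl⟩⟩

lemma sum_mul_le_sum_castLE {l s : ℕ} (hs : s ≤ l) {σ : Fin l → ℝ} (hσ : Antitone σ)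
    (hσ0 : ∀ u, 0 ≤ σ u) {B : Fin l → ℝ} (hB0 : ∀ u, 0 ≤ B u) (hB1 : ∀ u, B u ≤ 1)
    (hBs : ∑ u, B u ≤ s) :
    ∑ u, σ u * B u ≤ ∑ j : Fin s, σ (Fin.castLE hs j) := by
  -- `τ = σ_{s+1}` (or `0` if `s = l`) makes every `(σ_u - τ) (B_u - χ_u)` nonpositive.
  set χ : Fin l → ℝ := fun u => if (u : ℕ) < s then 1 else 0
  set τ : ℝ := if hsl : s < l then σ ⟨s, hsl⟩ else 0
  have hτ0 : 0 ≤ τ := by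
    unfold τ; split_ifs
    exacts [hσ0 _, le_rfl]
  have hχ : ∑ u, χ u = s := by
    simpa [χ] using (Fin.sum_castLE_eq_sum_ite hs (fun _ => (1 : ℝ))).symm
  have hterm : ∀ u, (σ u - τ) * (B u - χ u) ≤ 0 := by
    intro u
    by_cases hu : (u : ℕ) < s
    · have : τ ≤ σ u := by
        unfold τ; split_ifs with hsl
        exacts [hσ (Fin.mk_le_mk.2 hu.le), hσ0 u]
      simp only [χ, if_pos hu]
      exact mul_nonpos_of_nonneg_of_nonpos (by linarith) (by linarith [hB1 u])
    · have hsl : s < l := (not_lt.1 hu).trans_lt u.isLt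
      have : σ u ≤ τ := by
        simp only [τ, dif_pos hsl]
        exact hσ (Fin.mk_le_mk.2 (not_lt.1 hu))
      simp only [χ, if_neg hu, sub_zero]
      exact mul_nonpos_of_nonpos_of_nonneg (by linarith) (hB0 u)
  have hsplit : ∑ u, σ u * B u - ∑ u, σ u * χ u =
      ∑ u, (σ u - τ) * (B u - χ u) + τ * (∑ u, B u - ∑ u, χ u) := by
    simp only [Finset.mul_sum, ← Finset.sum_sub_distrib, ← Finset.sum_add_distrib]
    exact Finset.sum_congr rfl fun u _ => by ring
  have hRHS : ∑ j : Fin s, σ (Fin.castLE hs j) = ∑ u, σ u * χ u := by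
    simp [Fin.sum_castLE_eq_sum_ite hs, χ]
  have hτterm : τ * (∑ u, B u - ∑ u, χ u) ≤ 0 :=
    mul_nonpos_of_nonneg_of_nonpos hτ0 (by linarith)
  have := Finset.sum_nonpos fun u (_ : u ∈ Finset.univ) => hterm u
  linarith

namespace HilbertModuleMat

variable {m : ℕ} {M : Type*} [NormedAddCommGroup M] (h : HilbertModuleMat m M)

lemma star_inner (u v : M) : star (h.inner u v) = h.inner v u :=
  (h.inner_conj u v).symm

lemma inner_add_left (u v w : M) : h.inner (u + v) w = h.inner u w + h.inner v w := by
  rw [← h.star_inner, h.inner_add_right, star_add, h.star_inner, h.star_inner]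

lemma inner_smul_left (u v : M) (c : Matrix (Fin m) (Fin m) ℂ) :
    h.inner (h.smul u c) v = star c * h.inner u v := by
  rw [← h.star_inner, h.inner_smul_right, star_mul, h.star_inner]

def innerRight (u : M) : M →+ Matrix (Fin m) (Fin m) ℂ :=
  AddMonoidHom.mk' (h.inner u) (h.inner_add_right u)

def innerLeft (v : M) : M →+ Matrix (Fin m) (Fin m) ℂ :=
  AddMonoidHom.mk' (h.inner · v) (fun u u' => h.inner_add_left u u' v)

lemma inner_sub_right (u v w : M) : h.inner u (v - w) = h.inner u v - h.inner u w :=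
  map_sub (h.innerRight u) v w

lemma inner_sub_left (u v w : M) : h.inner (u - v) w = h.inner u w - h.inner v w :=
  map_sub (h.innerLeft w) u v

lemma inner_sum_right {ι : Type*} (s : Finset ι) (u : M) (f : ι → M) :
    h.inner u (∑ i ∈ s, f i) = ∑ i ∈ s, h.inner u (f i) :=
  map_sum (h.innerRight u) f s

lemma inner_sum_left {ι : Type*} (s : Finset ι) (f : ι → M) (v : M) :
    h.inner (∑ i ∈ s, f i) v = ∑ i ∈ s, h.inner (f i) v :=
  map_sum (h.innerLeft v) f s

lemma smul_inner_self {q : M} (hq : IsIdempotentElem (h.inner q q)) :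
    h.smul q (h.inner q q) = q := by
  have hself : star (h.inner q q) = h.inner q q := h.star_inner q q
  rw [← sub_eq_zero]
  apply h.inner_definite
  simp only [h.inner_sub_left, h.inner_sub_right, h.inner_smul_left, h.inner_smul_right, hself,
    hq.eq]
  abel

lemma inner_mul_inner_self {q : M} (hq : IsIdempotentElem (h.inner q q)) (x : M) :
    h.inner x q * h.inner q q = h.inner x q := by
  rw [← h.inner_smul_right, h.smul_inner_self hq]

lemma trace_inner_mul_inner_nonneg (x y : M) : 0 ≤ (h.inner x y * h.inner y x).trace := by
  rw [← h.star_inner y x, star_eq_conjTranspose]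
  exact (posSemidef_conjTranspose_mul_self _).trace_nonneg

lemma ofReal_re_trace_inner_mul_inner (x y : M) :
    (((h.inner x y * h.inner y x).trace.re : ℝ) : ℂ) = (h.inner x y * h.inner y x).trace :=
  (Complex.eq_re_of_ofReal_le (h.trace_inner_mul_inner_nonneg x y)).symm

section Orthonormal

variable {ι : Type*} [Fintype ι] {f : ι → M}

lemma inner_sum_smul_inner (x y : M) :
    h.inner (∑ j, h.smul (f j) (h.inner (f j) x)) y = ∑ j, h.inner x (f j) * h.inner (f j) y := by
  simp only [h.inner_sum_left, h.inner_smul_left, h.star_inner]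

lemma inner_sub_sum_smul_inner_eq_zero (horth : ∀ i j, i ≠ j → h.inner (f i) (f j) = 0)
    (hidem : ∀ j, IsIdempotentElem (h.inner (f j) (f j))) (x : M) (k : ι) :
    h.inner (x - ∑ j, h.smul (f j) (h.inner (f j) x)) (f k) = 0 := by
  rw [h.inner_sub_left, h.inner_sum_smul_inner, Finset.sum_eq_single k
    (fun j _ hj => by rw [horth j k hj, mul_zero]) (by simp), h.inner_mul_inner_self (hidem k),
    sub_self]

lemma inner_sub_sum_smul_inner_self (horth : ∀ i j, i ≠ j → h.inner (f i) (f j) = 0)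
    (hidem : ∀ j, IsIdempotentElem (h.inner (f j) (f j))) (x : M) :
    h.inner (x - ∑ j, h.smul (f j) (h.inner (f j) x)) (x - ∑ j, h.smul (f j) (h.inner (f j) x)) =
      h.inner x x - ∑ j, h.inner x (f j) * h.inner (f j) x := by
  have hperp : h.inner (x - ∑ j, h.smul (f j) (h.inner (f j) x))
      (∑ j, h.smul (f j) (h.inner (f j) x)) = 0 := by
    simp only [h.inner_sum_right, h.inner_smul_right,
      h.inner_sub_sum_smul_inner_eq_zero horth hidem, zero_mul, Finset.sum_const_zero]
  rw [h.inner_sub_right _ x, hperp, sub_zero, h.inner_sub_left, h.inner_sum_smul_inner]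

lemma sum_re_trace_inner_mul_inner_le (horth : ∀ i j, i ≠ j → h.inner (f i) (f j) = 0)
    (hidem : ∀ j, IsIdempotentElem (h.inner (f j) (f j))) (x : M) :
    ∑ j, (h.inner x (f j) * h.inner (f j) x).trace.re ≤ (h.inner x x).trace.re := by
  have hres := (h.inner_self_posSemidef (x - ∑ j, h.smul (f j) (h.inner (f j) x))).trace_nonneg
  rw [h.inner_sub_sum_smul_inner_self horth hidem, trace_sub, trace_sum] at hres
  simpa [← Complex.re_sum] using (Complex.le_def.1 hres).1

end Orthonormal

lemma recErr_eq_trace_sub {n s : ℕ} (w : Fin n → M) {f : Fin s → M}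
    (horth : ∀ i j, i ≠ j → h.inner (f i) (f j) = 0)
    (hidem : ∀ j, IsIdempotentElem (h.inner (f j) (f j))) :
    recErr h w f = (∑ t, h.inner (w t) (w t)).trace -
      ∑ j, (∑ t, h.inner (w t) (f j) * h.inner (f j) (w t)).trace := by
  simp only [recErr, h.inner_sub_sum_smul_inner_self horth hidem, trace_sum, trace_sub,
    Finset.sum_sub_distrib]
  rw [Finset.sum_comm]

structure IsPrincipalAxes {n l : ℕ} (w : Fin n → M) (σ : Fin l → ℝ) (p : Fin l → M) : Prop where
  orthogonal : ∀ a b, a ≠ b → h.inner (p a) (p b) = 0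
  idempotent : ∀ a, IsIdempotentElem (h.inner (p a) (p a))
  trace_inner_self : ∀ a, (h.inner (p a) (p a)).trace = 1
  sum_smul_inner : ∀ t, ∑ a, h.smul (p a) (h.inner (p a) (w t)) = w t
  sum_inner_mul_inner : ∀ a b, ∑ t, h.inner (p a) (w t) * h.inner (w t) (p b) =
    if a = b then (σ a : ℂ) • h.inner (p a) (p a) else 0

namespace IsPrincipalAxes

variable {h} {n l : ℕ} {w : Fin n → M} {σ : Fin l → ℝ} {p : Fin l → M}

lemma trace_sum_inner_mul_inner (hp : h.IsPrincipalAxes w σ p) (a : Fin l) :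
    (∑ t, h.inner (w t) (p a) * h.inner (p a) (w t)).trace = σ a := by
  rw [trace_sum]
  simp_rw [trace_mul_comm (h.inner (w _) (p a))]
  rw [← trace_sum, hp.sum_inner_mul_inner a a, if_pos rfl, trace_smul, hp.trace_inner_self,
    smul_eq_mul, mul_one]

lemma sum_inner_mul_inner_eq (hp : h.IsPrincipalAxes w σ p) (q : M) :
    ∑ t, h.inner q (w t) * h.inner (w t) q =
      ∑ a, (σ a : ℂ) • (h.inner q (p a) * h.inner (p a) q) := by
  have hright : ∀ t, h.inner q (w t) = ∑ a, h.inner q (p a) * h.inner (p a) (w t) := fun t => by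
    conv_lhs => rw [← hp.sum_smul_inner t]
    simp only [h.inner_sum_right, h.inner_smul_right]
  have hleft : ∀ t, h.inner (w t) q = ∑ b, h.inner (w t) (p b) * h.inner (p b) q := fun t => by
    conv_lhs => rw [← hp.sum_smul_inner t]
    simp only [h.inner_sum_left, h.inner_smul_left, h.star_inner]
  calc ∑ t, h.inner q (w t) * h.inner (w t) q
      = ∑ a, ∑ b, h.inner q (p a) *
          (∑ t, h.inner (p a) (w t) * h.inner (w t) (p b)) * h.inner (p b) q := by
        simp only [hright, hleft, Finset.mul_sum, Finset.sum_mul, mul_assoc]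
        exact (Finset.sum_congr rfl fun _ _ => Finset.sum_comm).trans
          (Finset.sum_comm.trans (Finset.sum_congr rfl fun _ _ => Finset.sum_comm))
    _ = ∑ a, (σ a : ℂ) • (h.inner q (p a) * h.inner (p a) q) := by
        simp only [hp.sum_inner_mul_inner, mul_ite, ite_mul, mul_zero, zero_mul,
          Finset.sum_ite_eq, Finset.mem_univ, if_true, mul_smul_comm, smul_mul_assoc,
          h.inner_mul_inner_self (hp.idempotent _)]

lemma trace_sum_inner_mul_inner_eq (hp : h.IsPrincipalAxes w σ p) (q : M) :
    (∑ t, h.inner (w t) q * h.inner q (w t)).trace =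
      ∑ a, (σ a : ℂ) * (h.inner (p a) q * h.inner q (p a)).trace := by
  simp_rw [trace_sum, trace_mul_comm (h.inner (w _) q), ← trace_sum, hp.sum_inner_mul_inner_eq,
    trace_sum, trace_smul, smul_eq_mul, trace_mul_comm (h.inner q _)]

lemma recErr_castLE (hp : h.IsPrincipalAxes w σ p) {s : ℕ} (hs : s ≤ l) :
    recErr h w (fun j : Fin s => p (Fin.castLE hs j)) =
      (∑ t, h.inner (w t) (w t)).trace - ∑ j : Fin s, (σ (Fin.castLE hs j) : ℂ) := by
  rw [h.recErr_eq_trace_sub w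
    (fun i j hij => hp.orthogonal _ _ ((Fin.castLE_injective hs).ne hij)) fun j => hp.idempotent _]
  simp only [hp.trace_sum_inner_mul_inner]

lemma recErr_castLE_le (hp : h.IsPrincipalAxes w σ p) (hσ : Antitone σ) (hσ0 : ∀ a, 0 ≤ σ a)
    {s : ℕ} (hs : s ≤ l) {q : Fin s → M} (horth : ∀ i j, i ≠ j → h.inner (q i) (q j) = 0)
    (hidem : ∀ j, IsIdempotentElem (h.inner (q j) (q j)))
    (htr : ∀ j, (h.inner (q j) (q j)).trace = 1) :
    recErr h w (fun j : Fin s => p (Fin.castLE hs j)) ≤ recErr h w q := by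
  set β : Fin s → Fin l → ℝ := fun j a => (h.inner (p a) (q j) * h.inner (q j) (p a)).trace.re
  have hcol : ∀ a, ∑ j, β j a ≤ 1 := fun a => by
    simpa [hp.trace_inner_self] using h.sum_re_trace_inner_mul_inner_le horth hidem (p a)
  have hrow : ∀ j, ∑ a, β j a ≤ 1 := fun j => by
    simpa [β, trace_mul_comm (h.inner (p _) _), htr] using
      h.sum_re_trace_inner_mul_inner_le hp.orthogonal hp.idempotent (q j)
  have hβ : ∀ j a, (h.inner (p a) (q j) * h.inner (q j) (p a)).trace = β j a := fun j a =>
    (h.ofReal_re_trace_inner_mul_inner _ _).symm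
  have hsum : ∑ a, ∑ j, β j a ≤ s := calc
    ∑ a, ∑ j, β j a = ∑ j, ∑ a, β j a := Finset.sum_comm
    _ ≤ ∑ _j : Fin s, (1 : ℝ) := Finset.sum_le_sum fun j _ => hrow j
    _ = s := by simp
  have hB := sum_mul_le_sum_castLE hs hσ hσ0 (B := fun a => ∑ j, β j a)
    (fun a => Finset.sum_nonneg fun j _ =>
      (Complex.nonneg_iff.1 (h.trace_inner_mul_inner_nonneg _ _)).1) hcol hsum
  rw [hp.recErr_castLE hs, h.recErr_eq_trace_sub w horth hidem]
  refine sub_le_sub_left ?_ _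
  simp only [hp.trace_sum_inner_mul_inner_eq, hβ]
  rw [Finset.sum_comm]
  exact_mod_cast (by simpa [Finset.mul_sum] using hB)

end IsPrincipalAxes

/-- The paper's `p_a = σ_a^{-1/2} W [v_a, 0, …, 0]` is `Σ_t w_t * axisCoeff σ v a t`. -/
noncomputable def axisCoeff [NeZero m] {n l : ℕ} (σ : Fin l → ℝ) (v : Fin l → Fin n × Fin m → ℂ)
    (a : Fin l) (t : Fin n) : Matrix (Fin m) (Fin m) ℂ :=
  Matrix.of fun i j => if j = 0 then ((√(σ a))⁻¹ : ℂ) * v a (t, i) else 0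

/-- `inner_apply` is the decomposition `G = V Σ V*` of the block Gram matrix
`G (s, i) (t, j) = ⟨w_s, w_t⟩ i j`. -/
structure IsKernelPCA [NeZero m] {n l : ℕ} (w : Fin n → M) (σ : Fin l → ℝ)
    (v : Fin l → Fin n × Fin m → ℂ) (p : Fin l → M) : Prop where
  inner_apply : ∀ s t i j,
    h.inner (w s) (w t) i j = ∑ a, (σ a : ℂ) * v a (s, i) * conj (v a (t, j))
  pos : ∀ a, 0 < σ a
  orthonormal : ∀ a b, ∑ x, conj (v a x) * v b x = if a = b then 1 else 0
  axis_eq : ∀ a, p a = ∑ t, h.smul (w t) (axisCoeff σ v a t)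

namespace IsKernelPCA

variable {h} [NeZero m] {n l : ℕ} {w : Fin n → M} {σ : Fin l → ℝ} {v : Fin l → Fin n × Fin m → ℂ}
  {p : Fin l → M}

lemma sqrt_ne_zero (hk : h.IsKernelPCA w σ v p) (a : Fin l) : (√(σ a) : ℂ) ≠ 0 := by
  exact_mod_cast (Real.sqrt_pos.2 (hk.pos a)).ne'

lemma sqrt_mul_sqrt (hk : h.IsKernelPCA w σ v p) (a : Fin l) : (√(σ a) : ℂ) * √(σ a) = σ a := by
  exact_mod_cast Real.mul_self_sqrt (hk.pos a).le

lemma sum_conj_mul_inner (hk : h.IsKernelPCA w σ v p) (a : Fin l) (t : Fin n) (k : Fin m) :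
    ∑ s, ∑ r, conj (v a (s, r)) * h.inner (w s) (w t) r k = σ a * conj (v a (t, k)) := by
  calc ∑ s, ∑ r, conj (v a (s, r)) * h.inner (w s) (w t) r k
      = ∑ b, (σ b : ℂ) * conj (v b (t, k)) * ∑ x, conj (v a x) * v b x := by
        rw [← Fintype.sum_prod_type' (fun s r => conj (v a (s, r)) * h.inner (w s) (w t) r k)]
        simp only [hk.inner_apply, Prod.mk.eta, Finset.mul_sum]
        rw [Finset.sum_comm]
        exact Finset.sum_congr rfl fun b _ => Finset.sum_congr rfl fun x _ => by ring
    _ = σ a * conj (v a (t, k)) := by simp [hk.orthonormal]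

lemma inner_axis_sample (hk : h.IsKernelPCA w σ v p) (a : Fin l) (t : Fin n) :
    h.inner (p a) (w t) =
      Matrix.of fun i k => if i = 0 then (√(σ a) : ℂ) * conj (v a (t, k)) else 0 := by
  rw [hk.axis_eq, h.inner_sum_left]
  ext i k
  simp only [h.inner_smul_left, Matrix.sum_apply, mul_apply, star_apply, of_apply, axisCoeff]
  split_ifs
  · simp only [star_mul', mul_assoc, ← Finset.mul_sum, Complex.star_def, hk.sum_conj_mul_inner,
      map_inv₀, Complex.conj_ofReal, ← hk.sqrt_mul_sqrt a]
    field_simp [hk.sqrt_ne_zero a]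
  · simp

lemma inner_sample_axis (hk : h.IsKernelPCA w σ v p) (a : Fin l) (t : Fin n) :
    h.inner (w t) (p a) = (σ a : ℂ) • axisCoeff σ v a t := by
  rw [← h.star_inner, hk.inner_axis_sample]
  ext i k
  simp only [star_apply, of_apply, Matrix.smul_apply, axisCoeff, smul_eq_mul]
  split_ifs
  · simp only [star_mul', Complex.star_def, Complex.conj_conj, Complex.conj_ofReal,
      ← hk.sqrt_mul_sqrt a]
    field_simp [hk.sqrt_ne_zero a]
  · simp

lemma inner_axis_axis (hk : h.IsKernelPCA w σ v p) (a b : Fin l) :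
    h.inner (p a) (p b) = if a = b then single 0 0 1 else 0 := by
  conv_lhs => rw [hk.axis_eq b]
  rw [h.inner_sum_right]
  ext i k
  simp only [h.inner_smul_right, hk.inner_axis_sample, Matrix.sum_apply, mul_apply, of_apply,
    axisCoeff]
  by_cases hi : i = 0 <;> by_cases hk0 : k = 0
  · simp only [if_pos hi, if_pos hk0, mul_assoc, mul_left_comm (conj _), ← Finset.mul_sum,
      ← Fintype.sum_prod_type', hk.orthonormal]
    split_ifs with hab
    · subst hab
      simp [hi, hk0, hk.sqrt_ne_zero a]
    · simp
  all_goals split_ifs <;> simp [hi, hk0, @eq_comm _ (0 : Fin m)]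

lemma isIdempotentElem_inner_axis (hk : h.IsKernelPCA w σ v p) (a : Fin l) :
    IsIdempotentElem (h.inner (p a) (p a)) := by
  rw [hk.inner_axis_axis, if_pos rfl, IsIdempotentElem, single_mul_single_same, mul_one]

lemma inner_axis_axis_of_ne (hk : h.IsKernelPCA w σ v p) {a b : Fin l} (hab : a ≠ b) :
    h.inner (p a) (p b) = 0 := by
  rw [hk.inner_axis_axis, if_neg hab]

lemma sum_inner_mul_inner (hk : h.IsKernelPCA w σ v p) (a b : Fin l) :
    ∑ t, h.inner (p a) (w t) * h.inner (w t) (p b) = (σ b : ℂ) • h.inner (p a) (p b) := by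
  conv_rhs => rw [hk.axis_eq b]
  simp only [hk.inner_sample_axis, mul_smul_comm, h.inner_sum_right, h.inner_smul_right,
    Finset.smul_sum]

lemma inner_sample_self (hk : h.IsKernelPCA w σ v p) (t : Fin n) :
    h.inner (w t) (w t) = ∑ a, h.inner (w t) (p a) * h.inner (p a) (w t) := by
  ext i k
  simp only [hk.inner_apply, hk.inner_sample_axis, hk.inner_axis_sample, Matrix.sum_apply,
    mul_apply, Matrix.smul_apply, of_apply, axisCoeff]
  refine Finset.sum_congr rfl fun a _ => ?_
  rw [Finset.sum_eq_single 0 (fun r _ hr => by simp [hr]) (by simp)]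
  simp only [if_true, smul_eq_mul, ← hk.sqrt_mul_sqrt a]
  field_simp [hk.sqrt_ne_zero a]

lemma sum_smul_inner_axis (hk : h.IsKernelPCA w σ v p) (t : Fin n) :
    ∑ a, h.smul (p a) (h.inner (p a) (w t)) = w t := by
  refine (sub_eq_zero.1 (h.inner_definite _ ?_)).symm
  rw [h.inner_sub_sum_smul_inner_self (fun a b => hk.inner_axis_axis_of_ne)
    hk.isIdempotentElem_inner_axis, ← hk.inner_sample_self, sub_self]

lemma isPrincipalAxes (hk : h.IsKernelPCA w σ v p) : h.IsPrincipalAxes w σ p where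
  orthogonal _ _ := hk.inner_axis_axis_of_ne
  idempotent := hk.isIdempotentElem_inner_axis
  trace_inner_self a := by rw [hk.inner_axis_axis, if_pos rfl, trace_single_eq_same]
  sum_smul_inner := hk.sum_smul_inner_axis
  sum_inner_mul_inner a b := by
    rw [hk.sum_inner_mul_inner]
    split_ifs with hab
    · rw [hab]
    · rw [hk.inner_axis_axis_of_ne hab, smul_zero]

end IsKernelPCA

end HilbertModuleMat

theorem pca_minimizes_reconstruction_error_general
    {m n l : ℕ} [NeZero m] {M : Type*} [NormedAddCommGroup M]
    (h : HilbertModuleMat m M) (w : Fin n → M)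
    (G : Matrix (Fin n × Fin m) (Fin n × Fin m) ℂ)
    (hG : ∀ s t i j, G (s, i) (t, j) = h.inner (w s) (w t) i j)
    (σ : Fin l → ℝ) (hσpos : ∀ s, 0 < σ s) (hσmono : ∀ s t, s ≤ t → σ t ≤ σ s)
    (v : Fin l → (Fin n × Fin m → ℂ))
    (hortho : ∀ s t, ∑ a, (starRingEnd ℂ) (v s a) * v t a = if s = t then 1 else 0)
    (hdecomp : ∀ a b, G a b = ∑ s, (σ s : ℂ) * v s a * (starRingEnd ℂ) (v s b))
    (p : Fin l → M)
    (hp : ∀ s, p s = ∑ t, h.smul (w t)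
      (Matrix.of fun i j =>
        if j = (0 : Fin m) then ((Real.sqrt (σ s))⁻¹ : ℂ) * v s (t, i) else 0))
    (s : ℕ) (hs : s ≤ l) :
    recErr h w (fun j : Fin s => p (Fin.castLE hs j)) =
      (∑ t, h.inner (w t) (w t)).trace - ∑ j : Fin s, (σ (Fin.castLE hs j) : ℂ) ∧
    ∀ phat : Fin s → M,
      (∀ i j, i ≠ j → h.inner (phat i) (phat j) = 0) →
      (∀ j, h.Normalized (phat j) ∧ (h.inner (phat j) (phat j)).rank = 1) →
      recErr h w (fun j : Fin s => p (Fin.castLE hs j)) ≤ recErr h w phat := by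
  have hk : h.IsKernelPCA w σ v p := ⟨fun s t i j => by rw [← hG, hdecomp], hσpos, hortho, hp⟩
  refine ⟨hk.isPrincipalAxes.recErr_castLE hs, fun phat horth hnorm => ?_⟩
  refine hk.isPrincipalAxes.recErr_castLE_le hσmono (fun a => (hσpos a).le) hs horth
    (fun j => (hnorm j).1.2) fun j => ?_
  rw [trace_eq_rank_of_isIdempotentElem (hnorm j).1.2, (hnorm j).2, Nat.cast_one]

/-- Optimality of RKHM kernel PCA: with the setup of principal axes
`p_s = σ_s^{-1/2} W[v_s,0,…,0]`, for each `s ≤ l` the family `{p_j}_{j≤s}` minimizes the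
traced matrix-valued reconstruction error over all orthonormal systems of `s` vectors with
rank-one self inner products, and the minimum value is `tr(Σ_t ⟨w_t,w_t⟩) − Σ_{j≤s} σ_j`. -/
theorem pca_minimizes_reconstruction_error
    {m n l : ℕ} [NeZero m] {M : Type*} [NormedAddCommGroup M] [CompleteSpace M]
    (h : HilbertModuleMat m M) (w : Fin n → M)
    (G : Matrix (Fin n × Fin m) (Fin n × Fin m) ℂ)
    (hG : ∀ s t i j, G (s, i) (t, j) = h.inner (w s) (w t) i j)
    (σ : Fin l → ℝ) (hσpos : ∀ s, 0 < σ s) (hσmono : ∀ s t, s ≤ t → σ t ≤ σ s)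
    (v : Fin l → (Fin n × Fin m → ℂ))
    (hortho : ∀ s t, ∑ a, (starRingEnd ℂ) (v s a) * v t a = if s = t then 1 else 0)
    (hdecomp : ∀ a b, G a b = ∑ s, (σ s : ℂ) * v s a * (starRingEnd ℂ) (v s b))
    (p : Fin l → M)
    (hp : ∀ s, p s = ∑ t, h.smul (w t)
      (Matrix.of fun i j =>
        if j = (0 : Fin m) then ((Real.sqrt (σ s))⁻¹ : ℂ) * v s (t, i) else 0))
    (s : ℕ) (hs : s ≤ l) :
    recErr h w (fun j : Fin s => p (Fin.castLE hs j)) =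
      (∑ t, h.inner (w t) (w t)).trace - ∑ j : Fin s, (σ (Fin.castLE hs j) : ℂ) ∧
    ∀ phat : Fin s → M,
      (∀ i j, i ≠ j → h.inner (phat i) (phat j) = 0) →
      (∀ j, h.Normalized (phat j) ∧ (h.inner (phat j) (phat j)).rank = 1) →
      recErr h w (fun j : Fin s => p (Fin.castLE hs j)) ≤ recErr h w phat :=
  pca_minimizes_reconstruction_error_general h w G hG σ hσpos hσmono v hortho hdecomp p hp s hs
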